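/- arXiv:1506.03267 — 2 statements merged into one kernel-verified Lean document; each statement's English description precedes it below -/
import Mathlib

section
/- Let X = ℝ^d. A function u ∈ L^∞(X) belongs to ℬ(X̄) := C(X̄) + ℬ₀(X) if and only if for every half-line α ∈ 𝕊_X there is a constant c ∈ ℂ such that lim_{a→α} ∫_{a+Λ} |u(x) − c| dx = 0, where Λ is a fixed compact neighborhood of 0. -/
open Filter Topology Set MeasureTheory Bornology BoundedContinuousFunction

noncomputable section

section ConeDefs
variable {X : Type*} [SeminormedAddCommGroup X] [Module ℝ X]

/-- A cone: a set stable under multiplication by positive scalars. -/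
def IsCone (D : Set X) : Prop := ∀ x ∈ D, ∀ r : ℝ, 0 < r → r • x ∈ D

/-- A truncated cone: the intersection of a cone with the complement of a bounded set. -/
def IsTruncCone (C : Set X) : Prop :=
  ∃ D B : Set X, IsCone D ∧ Bornology.IsBounded B ∧ C = D ∩ Bᶜ

/-- The half-line through `a` is eventually in `C`. -/
def EvIn (a : X) (C : Set X) : Prop :=
  ∃ s : ℝ, 0 < s ∧ ∀ r : ℝ, 1 ≤ r → r • (s • a) ∈ C

/-- The filter of truncated-cone neighborhoods of the direction of `a`. -/
def coneFilter (a : X) : Filter X :=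
  Filter.generate {C | IsOpen C ∧ IsTruncCone C ∧ EvIn a C}

/-- The half-line `α` is eventually in `C`. -/
def RayEvIn (α : Module.Ray ℝ X) (C : Set X) : Prop :=
  ∃ (a : X) (ha : a ≠ 0), rayOfNeZero ℝ a ha = α ∧ ∀ r : ℝ, 1 ≤ r → r • a ∈ C

/-- The filter of truncated-cone neighborhoods of the half-line `α`. -/
def rayConeFilter (α : Module.Ray ℝ X) : Filter X :=
  Filter.generate {C | IsOpen C ∧ IsTruncCone C ∧ RayEvIn α C}

end ConeDefs

instance instRayVectorTop {X : Type*} [SeminormedAddCommGroup X] [Module ℝ X] :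
    TopologicalSpace (RayVector ℝ X) :=
  inferInstanceAs (TopologicalSpace {v : X // v ≠ 0})

/-- The sphere at infinity with the quotient topology from `X ∖ {0}`. -/
instance instSphereTop {X : Type*} [SeminormedAddCommGroup X] [Module ℝ X] :
    TopologicalSpace (Module.Ray ℝ X) :=
  inferInstanceAs (TopologicalSpace (Quotient (RayVector.Setoid ℝ X)))

/-- The spherical compactification `X̄ = X ⊔ 𝕊_X`. -/
def SphComp (X : Type*) [SeminormedAddCommGroup X] [Module ℝ X] : Type _ :=
  X ⊕ Module.Ray ℝ X

instance instSphCompTop {X : Type*} [SeminormedAddCommGroup X] [Module ℝ X] :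
    TopologicalSpace (SphComp X) :=
  TopologicalSpace.generateFrom
    ({s | ∃ O : Set X, IsOpen O ∧ s = Sum.inl '' O} ∪
     {s | ∃ C : Set X, IsOpen C ∧ IsTruncCone C ∧
          s = Sum.inl '' C ∪ Sum.inr '' {α : Module.Ray ℝ X | RayEvIn α C}})


/-- Membership in `L^∞`: measurable and (everywhere) bounded. -/
def MemLinf {d : ℕ} (u : EuclideanSpace ℝ (Fin d) → ℂ) : Prop :=
  Measurable u ∧ ∃ M : ℝ, ∀ x, ‖u x‖ ≤ M

/-- `u ∈ ℬ₀(X)`: the means of `|u|` over translates of `Λ` tend to `0` along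
every half-line at infinity. -/
def InB0 {d : ℕ} (Λ : Set (EuclideanSpace ℝ (Fin d)))
    (u : EuclideanSpace ℝ (Fin d) → ℂ) : Prop :=
  ∀ α : Module.Ray ℝ (EuclideanSpace ℝ (Fin d)),
    Filter.Tendsto (fun a => ∫ x in (fun y => a + y) '' Λ, ‖u x‖) (rayConeFilter α) (nhds 0)

section Aux
variable {X : Type*} [NormedAddCommGroup X] [NormedSpace ℝ X]

lemma rayEvIn_mono {α : Module.Ray ℝ X} {C C' : Set X} (h : RayEvIn α C) (hsub : C ⊆ C') :
    RayEvIn α C' := by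
  obtain ⟨a, ha, hr, hm⟩ := h
  exact ⟨a, ha, hr, fun r hr' => hsub (hm r hr')⟩

lemma rayEvIn_univ (α : Module.Ray ℝ X) : RayEvIn α (univ : Set X) := by
  induction α using Module.Ray.ind with
  | h v hv => exact ⟨v, hv, rfl, fun r hr => trivial⟩

lemma rayEvIn_inter {α : Module.Ray ℝ X} {C₁ C₂ : Set X} (h₁ : RayEvIn α C₁)
    (h₂ : RayEvIn α C₂) : RayEvIn α (C₁ ∩ C₂) := by
  obtain ⟨a₁, ha₁, hr₁, hm₁⟩ := h₁
  obtain ⟨a₂, ha₂, hr₂, hm₂⟩ := h₂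
  have hsr : SameRay ℝ a₁ a₂ := (ray_eq_iff ha₁ ha₂).mp (hr₁.trans hr₂.symm)
  obtain ⟨r, hr, hra⟩ := hsr.exists_pos_left ha₁ ha₂
  have ht1 : (1:ℝ) ≤ max 1 r := le_max_left _ _
  have htr : r ≤ max 1 r := le_max_right _ _
  have ht0 : (0:ℝ) < max 1 r := lt_of_lt_of_le one_pos ht1
  refine ⟨(max 1 r) • a₁, smul_ne_zero ht0.ne' ha₁, by rw [ray_pos_smul ha₁ ht0]; exact hr₁, ?_⟩
  intro s hs
  rw [smul_smul]
  constructor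
  · exact hm₁ _ (by nlinarith)
  · have hco : (s * max 1 r) • a₁ = (s * max 1 r / r) • a₂ := by
      rw [← hra, smul_smul]
      congr 1
      field_simp
    rw [hco]
    refine hm₂ _ ?_
    rw [le_div_iff₀ hr]
    nlinarith

lemma isCone_univ : IsCone (univ : Set X) := fun _ _ _ _ => trivial

lemma isTruncCone_univ : IsTruncCone (univ : Set X) :=
  ⟨univ, ∅, isCone_univ, Bornology.isBounded_empty, by simp⟩

lemma isTruncCone_inter {C₁ C₂ : Set X} (h₁ : IsTruncCone C₁) (h₂ : IsTruncCone C₂) :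
    IsTruncCone (C₁ ∩ C₂) := by
  obtain ⟨D₁, B₁, hD₁, hB₁, rfl⟩ := h₁
  obtain ⟨D₂, B₂, hD₂, hB₂, rfl⟩ := h₂
  refine ⟨D₁ ∩ D₂, B₁ ∪ B₂, fun x hx r hr => ⟨hD₁ x hx.1 r hr, hD₂ x hx.2 r hr⟩,
    hB₁.union hB₂, ?_⟩
  rw [compl_union]
  ext x
  simp only [mem_inter_iff, mem_compl_iff]
  tauto

lemma isTruncCone_compl_closedBall (R : ℝ) :
    IsTruncCone ((Metric.closedBall (0:X) R)ᶜ) :=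
  ⟨univ, Metric.closedBall 0 R, isCone_univ, Metric.isBounded_closedBall, by simp⟩

lemma rayEvIn_compl_closedBall (α : Module.Ray ℝ X) (R : ℝ) :
    RayEvIn α (Metric.closedBall (0:X) R)ᶜ := by
  induction α using Module.Ray.ind with
  | h v hv =>
    have hv0 : 0 < ‖v‖ := norm_pos_iff.mpr hv
    have ht : 0 < (|R| + 1) / ‖v‖ := by positivity
    refine ⟨((|R| + 1) / ‖v‖) • v, smul_ne_zero ht.ne' hv, ray_pos_smul hv ht _, ?_⟩
    intro r hr
    have hr0 : (0:ℝ) < r := lt_of_lt_of_le one_pos hr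
    simp only [mem_compl_iff, Metric.mem_closedBall, dist_zero_right, not_le]
    rw [smul_smul, norm_smul, Real.norm_eq_abs, abs_of_pos (by positivity), mul_assoc]
    have he : (|R| + 1) / ‖v‖ * ‖v‖ = |R| + 1 := by field_simp
    rw [he]
    nlinarith [le_abs_self R, abs_nonneg R]

lemma mem_rayConeFilter_of_gen {α : Module.Ray ℝ X} {C : Set X} (ho : IsOpen C)
    (ht : IsTruncCone C) (he : RayEvIn α C) : C ∈ rayConeFilter α :=
  Filter.mem_generate_of_mem ⟨ho, ht, he⟩

lemma exists_gen_subset {α : Module.Ray ℝ X} {S : Set X} (hS : S ∈ rayConeFilter α) :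
    ∃ C : Set X, IsOpen C ∧ IsTruncCone C ∧ RayEvIn α C ∧ C ⊆ S := by
  rw [rayConeFilter, Filter.mem_generate_iff] at hS
  obtain ⟨t, htg, htf, hts⟩ := hS
  have key : ∀ t0 : Set (Set X), t0.Finite →
      t0 ⊆ {C | IsOpen C ∧ IsTruncCone C ∧ RayEvIn α C} →
      IsOpen (⋂₀ t0) ∧ IsTruncCone (⋂₀ t0) ∧ RayEvIn α (⋂₀ t0) := by
    intro t0 ht0
    refine Set.Finite.induction_on
      (motive := fun t1 _ => t1 ⊆ {C | IsOpen C ∧ IsTruncCone C ∧ RayEvIn α C} →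
        IsOpen (⋂₀ t1) ∧ IsTruncCone (⋂₀ t1) ∧ RayEvIn α (⋂₀ t1)) t0 ht0 ?_ ?_
    · intro _
      rw [sInter_empty]
      exact ⟨isOpen_univ, isTruncCone_univ, rayEvIn_univ α⟩
    · intro a s _ _ ih hsub
      rw [sInter_insert]
      obtain ⟨h1, h2, h3⟩ := hsub (mem_insert _ _)
      obtain ⟨h4, h5, h6⟩ := ih ((subset_insert _ _).trans hsub)
      exact ⟨h1.inter h4, isTruncCone_inter h2 h5, rayEvIn_inter h3 h6⟩
  obtain ⟨h1, h2, h3⟩ := key t htf htg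
  exact ⟨⋂₀ t, h1, h2, h3, hts⟩

lemma rayEvIn_of_mem_filter {α : Module.Ray ℝ X} {S : Set X} (h : S ∈ rayConeFilter α) :
    RayEvIn α S := by
  obtain ⟨C, _, _, he, hsub⟩ := exists_gen_subset h
  exact rayEvIn_mono he hsub

lemma exists_mem_of_mem_filter {α : Module.Ray ℝ X} {S : Set X} (h : S ∈ rayConeFilter α) :
    ∃ b : X, ∃ hb : b ≠ 0, rayOfNeZero ℝ b hb = α ∧ b ∈ S := by
  obtain ⟨a, ha, hr, hm⟩ := rayEvIn_of_mem_filter h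
  exact ⟨a, ha, hr, by simpa using hm 1 le_rfl⟩

lemma rayEvIn_of_mem_truncCone {C : Set X} (ht : IsTruncCone C) {x : X} (hx : x ∈ C)
    (hx0 : x ≠ 0) : RayEvIn (rayOfNeZero ℝ x hx0) C := by
  obtain ⟨D, B, hD, hB, rfl⟩ := ht
  obtain ⟨M, hM⟩ := hB.exists_norm_le
  have hxn : 0 < ‖x‖ := norm_pos_iff.mpr hx0
  have ht0 : 0 < (|M| + 1) / ‖x‖ := by positivity
  refine ⟨((|M| + 1) / ‖x‖) • x, smul_ne_zero ht0.ne' hx0, ray_pos_smul hx0 ht0 _, ?_⟩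
  intro r hr
  have hr0 : (0:ℝ) < r := lt_of_lt_of_le one_pos hr
  rw [smul_smul]
  refine ⟨hD x hx.1 _ (by positivity), ?_⟩
  intro hmem
  have hle := hM _ hmem
  rw [norm_smul, Real.norm_eq_abs, abs_of_pos (by positivity), mul_assoc] at hle
  have he : (|M| + 1) / ‖x‖ * ‖x‖ = |M| + 1 := by field_simp
  rw [he] at hle
  nlinarith [le_abs_self M, abs_nonneg M]
end Aux

section Aux2
open Pointwise
variable {X : Type*} [NormedAddCommGroup X] [NormedSpace ℝ X]

lemma fatten {C : Set X} (ho : IsOpen C) (ht : IsTruncCone C) {α : Module.Ray ℝ X}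
    (he : RayEvIn α C) {Λ : Set X} (hΛ : Bornology.IsBounded Λ) :
    ∃ C' : Set X, IsOpen C' ∧ IsTruncCone C' ∧ RayEvIn α C' ∧
      ∀ a ∈ C', ∀ y ∈ Λ, a + y ∈ C := by
  obtain ⟨D, B, hD, hB, rfl⟩ := ht
  obtain ⟨a, ha0, haray, haC⟩ := he
  have haC1 : a ∈ D ∩ Bᶜ := by simpa using haC 1 le_rfl
  obtain ⟨δ, hδ0, hδ⟩ := Metric.isOpen_iff.mp ho a haC1
  obtain ⟨R₀, hR₀⟩ := hΛ.exists_norm_le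
  obtain ⟨M₀, hM₀⟩ := hB.exists_norm_le
  set R := |R₀| with hRdef
  set M := |M₀| with hMdef
  have hR : ∀ y ∈ Λ, ‖y‖ ≤ R := fun y hy => (hR₀ y hy).trans (le_abs_self _)
  have hM : ∀ b ∈ B, ‖b‖ ≤ M := fun b hb => (hM₀ b hb).trans (le_abs_self _)
  have hR0 : 0 ≤ R := abs_nonneg _
  have hM0 : 0 ≤ M := abs_nonneg _
  have han : 0 < ‖a‖ := norm_pos_iff.mpr ha0
  set q := (2 * R + 2) / δ with hq
  have hq0 : 0 < q := by positivity
  set T := (M + R + 1) + q * (‖a‖ + δ) with hT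
  have hT0 : 0 < T := by positivity
  set D' := {y : X | ∃ r : ℝ, 0 < r ∧ ∃ z ∈ Metric.ball a (δ/2), y = r • z} with hD'def
  have hD'cone : IsCone D' := by
    rintro y ⟨r, hr, z, hz, rfl⟩ s hs
    exact ⟨s * r, by positivity, z, hz, (smul_smul s r z).symm ▸ rfl⟩
  have hD'open : IsOpen D' := by
    have hre : D' = ⋃ r : {r : ℝ // 0 < r}, (r : ℝ) • Metric.ball a (δ/2) := by
      ext y
      constructor
      · rintro ⟨r, hr, z, hz, rfl⟩
        exact mem_iUnion.mpr ⟨⟨r, hr⟩, ⟨z, hz, rfl⟩⟩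
      · intro h
        obtain ⟨⟨r, hr⟩, z, hz, rfl⟩ := mem_iUnion.mp h
        exact ⟨r, hr, z, hz, rfl⟩
    rw [hre]
    exact isOpen_iUnion fun r => Metric.isOpen_ball.smul₀ r.2.ne'
  have ht00 : 0 < (T + 1) / ‖a‖ := by positivity
  refine ⟨D' ∩ (Metric.closedBall 0 T)ᶜ, hD'open.inter Metric.isClosed_closedBall.isOpen_compl,
    ⟨D', Metric.closedBall 0 T, hD'cone, Metric.isBounded_closedBall, rfl⟩,
    ⟨((T + 1) / ‖a‖) • a, smul_ne_zero ht00.ne' ha0,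
      by rw [ray_pos_smul ha0 ht00]; exact haray, ?_⟩, ?_⟩
  · intro r hr
    have hr0 : (0:ℝ) < r := lt_of_lt_of_le one_pos hr
    rw [smul_smul]
    constructor
    · exact ⟨r * ((T + 1) / ‖a‖), by positivity, a, Metric.mem_ball_self (by positivity), rfl⟩
    · simp only [mem_compl_iff, Metric.mem_closedBall, dist_zero_right, not_le]
      rw [norm_smul, Real.norm_eq_abs, abs_of_pos (by positivity), mul_assoc]
      have he : (T + 1) / ‖a‖ * ‖a‖ = T + 1 := by field_simp
      rw [he]
      nlinarith
  · rintro a' ⟨⟨r, hr0, z, hz, rfl⟩, ha'T⟩ y hy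
    have hzn : dist z a < δ / 2 := Metric.mem_ball.mp hz
    have hz_ub : ‖z‖ ≤ ‖a‖ + δ/2 := by
      have h1 : ‖z‖ - ‖a‖ ≤ ‖z - a‖ := norm_sub_norm_le z a
      rw [← dist_eq_norm] at h1
      linarith
    have ha'n : T < ‖r • z‖ := by
      simpa [Metric.mem_closedBall, dist_zero_right] using ha'T
    have hrz : ‖r • z‖ = r * ‖z‖ := by
      rw [norm_smul, Real.norm_eq_abs, abs_of_pos hr0]
    have hr_lb : q < r := by
      by_contra hcon
      push_neg at hcon
      have h2 : ‖r • z‖ ≤ q * (‖a‖ + δ/2) := by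
        rw [hrz]
        exact mul_le_mul hcon hz_ub (norm_nonneg _) hq0.le
      nlinarith
    have hrδ : 2 * R + 2 < r * δ := by
      rw [hq, div_lt_iff₀ hδ0] at hr_lb
      linarith
    have key : dist (r • z + y) (r • a) < r * δ := by
      have h3 : dist (r • z + y) (r • z) = ‖y‖ := by
        rw [dist_eq_norm]
        simp
      have h4 : dist (r • z) (r • a) = r * dist z a := by
        rw [dist_smul₀, Real.norm_eq_abs, abs_of_pos hr0]
      calc dist (r • z + y) (r • a) ≤ dist (r • z + y) (r • z) + dist (r • z) (r • a) :=
            dist_triangle _ _ _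
        _ = ‖y‖ + r * dist z a := by rw [h3, h4]
        _ < R + r * (δ/2) + 1 := by nlinarith [hR y hy, hzn]
        _ < r * δ := by nlinarith
    obtain ⟨w, hw, hww⟩ : ∃ w ∈ Metric.ball a δ, r • z + y = r • w := by
      refine ⟨r⁻¹ • (r • z + y), ?_, by rw [smul_smul, mul_inv_cancel₀ hr0.ne', one_smul]⟩
      have ha_eq : a = r⁻¹ • (r • a) := by
        rw [smul_smul, inv_mul_cancel₀ hr0.ne', one_smul]
      rw [Metric.mem_ball]
      calc dist (r⁻¹ • (r • z + y)) a = dist (r⁻¹ • (r • z + y)) (r⁻¹ • (r • a)) := by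
            rw [← ha_eq]
        _ = r⁻¹ * dist (r • z + y) (r • a) := by
            rw [dist_smul₀, Real.norm_eq_abs, abs_of_pos (by positivity)]
        _ < r⁻¹ * (r * δ) := by
            apply mul_lt_mul_of_pos_left key (by positivity)
        _ = δ := by field_simp
    constructor
    · rw [hww]
      exact hD w (hδ hw).1 r hr0
    · intro hmem
      have h5 := hM _ hmem
      have h6 : ‖r • z‖ ≤ ‖r • z + y‖ + ‖y‖ := by
        have e : r • z = (r • z + y) + (-y) := by abel
        calc ‖r • z‖ = ‖(r • z + y) + (-y)‖ := by rw [← e]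
          _ ≤ ‖r • z + y‖ + ‖-y‖ := norm_add_le _ _
          _ = ‖r • z + y‖ + ‖y‖ := by rw [norm_neg]
      nlinarith [hR y hy, mul_pos hq0 (by positivity : (0:ℝ) < ‖a‖ + δ)]

lemma fatten_mem {α : Module.Ray ℝ X} {S : Set X} (hS : S ∈ rayConeFilter α) {Λ : Set X}
    (hΛ : Bornology.IsBounded Λ) :
    {a : X | ∀ y ∈ Λ, a + y ∈ S} ∈ rayConeFilter α := by
  obtain ⟨C, ho, ht, he, hsub⟩ := exists_gen_subset hS
  obtain ⟨C', ho', ht', he', hC'⟩ := fatten ho ht he hΛ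
  exact Filter.mem_of_superset (mem_rayConeFilter_of_gen ho' ht' he')
    (fun a ha y hy => hsub (hC' a ha y hy))

lemma continuous_inl_sphComp :
    Continuous[inferInstance, instSphCompTop] (@Sum.inl X (Module.Ray ℝ X)) := by
  apply continuous_generateFrom_iff.mpr
  rintro s (⟨O, hO, rfl⟩ | ⟨C, hCo, hCt, rfl⟩)
  · change IsOpen (Sum.inl ⁻¹' (Sum.inl '' O : Set (X ⊕ Module.Ray ℝ X)))
    rwa [preimage_image_eq O Sum.inl_injective]
  · have hpre : Sum.inl ⁻¹' (Sum.inl '' C ∪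
        Sum.inr '' {α : Module.Ray ℝ X | RayEvIn α C}) = C := by
      ext x
      simp
    change IsOpen (Sum.inl ⁻¹' (Sum.inl '' C ∪
        Sum.inr '' {α : Module.Ray ℝ X | RayEvIn α C} : Set (X ⊕ Module.Ray ℝ X)))
    rwa [hpre]

lemma tendsto_inl_rayConeFilter (α : Module.Ray ℝ X) :
    Tendsto Sum.inl (rayConeFilter α)
      (@nhds (SphComp X) instSphCompTop (Sum.inr α)) := by
  apply TopologicalSpace.tendsto_nhds_generateFrom_iff.mpr
  rintro s (⟨O, hO, rfl⟩ | ⟨C, hCo, hCt, rfl⟩) hmem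
  · exact absurd hmem (by simp)
  · have hα : RayEvIn α C := by
      rcases hmem with h | h
      · simp at h
      · obtain ⟨β, hβ, hββ⟩ := h
        rw [Sum.inr.injEq] at hββ
        exact hββ ▸ hβ
    have hpre : Sum.inl ⁻¹' (Sum.inl '' C ∪
        Sum.inr '' {β : Module.Ray ℝ X | RayEvIn β C}) = C := by
      ext x
      simp
    rw [hpre]
    exact mem_rayConeFilter_of_gen hCo hCt hα

lemma isOpen_inl_image {O : Set X} (hO : IsOpen O) :
    @IsOpen (SphComp X) instSphCompTop (Sum.inl '' O) :=
  TopologicalSpace.isOpen_generateFrom_of_mem (Or.inl ⟨O, hO, rfl⟩)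

lemma isOpen_cone_nbhd {C : Set X} (ho : IsOpen C) (ht : IsTruncCone C) :
    @IsOpen (SphComp X) instSphCompTop
      (Sum.inl '' C ∪ Sum.inr '' {β : Module.Ray ℝ X | RayEvIn β C}) :=
  TopologicalSpace.isOpen_generateFrom_of_mem (Or.inr ⟨C, ho, ht, rfl⟩)

end Aux2

/-- `u ∈ ℬ(X̄) = C(X̄) + ℬ₀(X)` iff `u` converges in the mean, at
every half-line `α ∈ 𝕊_X`, to some constant `c`. -/
theorem statement9 {d : ℕ} (Λ : Set (EuclideanSpace ℝ (Fin d))) (hΛc : IsCompact Λ)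
    (hΛn : Λ ∈ nhds (0 : EuclideanSpace ℝ (Fin d)))
    (u : EuclideanSpace ℝ (Fin d) → ℂ) (hu : MemLinf u) :
    (∃ v w : EuclideanSpace ℝ (Fin d) → ℂ,
        (∃ vc : C(SphComp (EuclideanSpace ℝ (Fin d)), ℂ), ∀ x, v x = vc (Sum.inl x)) ∧
        MemLinf w ∧ InB0 Λ w ∧ ∀ x, u x = v x + w x) ↔
      (∀ α : Module.Ray ℝ (EuclideanSpace ℝ (Fin d)), ∃ c : ℂ,
        Filter.Tendsto (fun a => ∫ x in (fun y => a + y) '' Λ, ‖u x - c‖)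
          (rayConeFilter α) (nhds 0)) := by
  classical
  obtain ⟨huM, Mu, hMu⟩ := hu
  have hMu0 : 0 ≤ Mu := le_trans (norm_nonneg _) (hMu 0)
  set m := (volume Λ).toReal with hmdef
  have hvolfin : volume Λ ≠ ⊤ := hΛc.measure_lt_top.ne
  have hvolpos : 0 < volume Λ := Measure.measure_pos_of_mem_nhds (μ := volume) hΛn
  have hm0 : 0 < m := ENNReal.toReal_pos hvolpos.ne' hvolfin
  have hcompact : ∀ a : EuclideanSpace ℝ (Fin d), IsCompact ((fun y => a + y) '' Λ) :=
    fun a => hΛc.image (continuous_add_left a)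
  have hmeasset : ∀ a : EuclideanSpace ℝ (Fin d), MeasurableSet ((fun y => a + y) '' Λ) :=
    fun a => (hcompact a).isClosed.measurableSet
  have himg : ∀ a : EuclideanSpace ℝ (Fin d),
      (fun y => a + y) '' Λ = (fun x => -a + x) ⁻¹' Λ := by
    intro a
    ext x
    constructor
    · rintro ⟨y, hy, rfl⟩
      simpa [neg_add_cancel_left] using hy
    · intro h
      exact ⟨-a + x, h, add_neg_cancel_left a x⟩
  have hvol : ∀ a : EuclideanSpace ℝ (Fin d), volume ((fun y => a + y) '' Λ) = volume Λ := by
    intro a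
    rw [himg a]
    exact measure_preimage_add volume (-a) Λ
  have hfinrestrict : ∀ a : EuclideanSpace ℝ (Fin d),
      IsFiniteMeasure (volume.restrict ((fun y => a + y) '' Λ)) := by
    intro a
    constructor
    rw [Measure.restrict_apply_univ, hvol a]
    exact hΛc.measure_lt_top
  have hIntOn : ∀ (f : EuclideanSpace ℝ (Fin d) → ℂ) (K : ℝ), Measurable f →
      (∀ x, ‖f x‖ ≤ K) → ∀ a : EuclideanSpace ℝ (Fin d),
      IntegrableOn (fun x => ‖f x‖) ((fun y => a + y) '' Λ) := by
    intro f K hf hK a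
    haveI := hfinrestrict a
    refine ⟨hf.norm.aestronglyMeasurable, ?_⟩
    apply HasFiniteIntegral.of_bounded (C := K)
    apply ae_of_all
    intro x
    rw [Real.norm_of_nonneg (norm_nonneg _)]
    exact hK x
  have hMean0 : ∀ (g : EuclideanSpace ℝ (Fin d) → ℝ) (a : EuclideanSpace ℝ (Fin d)),
      (∀ x, 0 ≤ g x) → 0 ≤ ∫ x in (fun y => a + y) '' Λ, g x :=
    fun g a hg => setIntegral_nonneg (hmeasset a) (fun x _ => hg x)
  have hMeanLe : ∀ (g : EuclideanSpace ℝ (Fin d) → ℝ) (K : ℝ) (a : EuclideanSpace ℝ (Fin d)),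
      IntegrableOn g ((fun y => a + y) '' Λ) →
      (∀ x ∈ (fun y => a + y) '' Λ, g x ≤ K) →
      ∫ x in (fun y => a + y) '' Λ, g x ≤ K * m := by
    intro g K a hint hbd
    have h1 : ∫ x in (fun y => a + y) '' Λ, g x ≤ ∫ _x in (fun y => a + y) '' Λ, K := by
      apply setIntegral_mono_on hint _ (hmeasset a) hbd
      exact (integrableOn_const_iff (C := K)).mpr (Or.inr (by rw [hvol a]; exact hΛc.measure_lt_top))
    rw [setIntegral_const, measureReal_def, hvol a] at h1
    calc ∫ x in (fun y => a + y) '' Λ, g x ≤ m • K := h1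
      _ = K * m := by rw [smul_eq_mul, mul_comm]
  have hMeanAdd : ∀ (f g : EuclideanSpace ℝ (Fin d) → ℂ) (a : EuclideanSpace ℝ (Fin d)),
      Measurable f → Measurable g →
      IntegrableOn (fun x => ‖f x‖) ((fun y => a + y) '' Λ) →
      IntegrableOn (fun x => ‖g x‖) ((fun y => a + y) '' Λ) →
      ∫ x in (fun y => a + y) '' Λ, ‖f x + g x‖ ≤
        (∫ x in (fun y => a + y) '' Λ, ‖f x‖) + ∫ x in (fun y => a + y) '' Λ, ‖g x‖ := by
    intro f g a hf hg hif hig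
    rw [← integral_add hif hig]
    apply setIntegral_mono_on _ (hif.add hig) (hmeasset a) (fun x _ => norm_add_le _ _)
    refine Integrable.mono' (hif.add hig) ((hf.add hg).norm.aestronglyMeasurable) ?_
    apply ae_of_all
    intro x
    rw [Real.norm_of_nonneg (norm_nonneg _)]
    exact norm_add_le _ _
  have hIntU : ∀ (cc : ℂ) (a : EuclideanSpace ℝ (Fin d)),
      IntegrableOn (fun x => ‖u x - cc‖) ((fun y => a + y) '' Λ) := by
    intro cc a
    exact hIntOn (fun x => u x - cc) (Mu + ‖cc‖) (huM.sub measurable_const)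
      (fun x => (norm_sub_le _ _).trans (add_le_add_left (hMu x) _)) a
  have hTwo : ∀ (c₁ c₂ : ℂ) (b : EuclideanSpace ℝ (Fin d)),
      ‖c₁ - c₂‖ * m ≤ (∫ x in (fun y => b + y) '' Λ, ‖u x - c₁‖) +
        ∫ x in (fun y => b + y) '' Λ, ‖u x - c₂‖ := by
    intro c₁ c₂ b
    have h1 : ‖c₁ - c₂‖ * m = ∫ _x in (fun y => b + y) '' Λ, ‖c₁ - c₂‖ := by
      rw [setIntegral_const, measureReal_def, hvol b, smul_eq_mul, mul_comm]
    rw [h1, ← integral_add (hIntU c₁ b) (hIntU c₂ b)]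
    apply setIntegral_mono_on _ ((hIntU c₁ b).add (hIntU c₂ b)) (hmeasset b)
    · intro x _
      have he : c₁ - c₂ = (u x - c₂) - (u x - c₁) := by ring
      rw [he]
      exact (norm_sub_le _ _).trans (le_of_eq (add_comm _ _))
    · exact (integrableOn_const_iff (C := ‖c₁ - c₂‖)).mpr (Or.inr (by rw [hvol b]; exact hΛc.measure_lt_top))
  have hTendsto0 : ∀ (f : EuclideanSpace ℝ (Fin d) → ℝ)
      (l : Filter (EuclideanSpace ℝ (Fin d))), (∀ a, 0 ≤ f a) →
      (∀ ε : ℝ, 0 < ε → {a | f a < ε} ∈ l) → Tendsto f l (nhds 0) := by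
    intro f l h0 h
    rw [NormedAddCommGroup.tendsto_nhds_zero]
    intro ε hε
    filter_upwards [h ε hε] with a ha
    rwa [Real.norm_of_nonneg (h0 a)]
  constructor
  · rintro ⟨v, w, ⟨vc, hvc⟩, ⟨hwm, Mw, hMw⟩, hw0, huvw⟩ α
    refine ⟨vc (Sum.inr α), ?_⟩
    have hvcont : Continuous v := by
      have hve : v = (fun x => vc (Sum.inl x)) := funext hvc
      rw [hve]
      exact vc.continuous.comp continuous_inl_sphComp
    have hvtends : Tendsto v (rayConeFilter α) (nhds (vc (Sum.inr α))) := by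
      have h1 := (vc.continuous.tendsto (Sum.inr α)).comp (tendsto_inl_rayConeFilter α)
      exact h1.congr fun a => (hvc a).symm
    have hvb : ∀ x, ‖v x‖ ≤ Mu + Mw := by
      intro x
      have he : v x = u x - w x := by rw [huvw x]; ring
      rw [he]
      exact (norm_sub_le _ _).trans (add_le_add (hMu x) (hMw x))
    apply hTendsto0 _ _ (fun a => hMean0 _ a (fun x => norm_nonneg _))
    intro ε hε
    have hε₁0 : 0 < ε / (2 * (m + 1)) := by positivity
    have hS : {x | ‖v x - vc (Sum.inr α)‖ < ε / (2 * (m + 1))} ∈ rayConeFilter α := by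
      have h2 := hvtends (Metric.ball_mem_nhds (vc (Sum.inr α)) hε₁0)
      rw [Filter.mem_map] at h2
      have hseteq : v ⁻¹' (Metric.ball (vc (Sum.inr α)) (ε / (2 * (m + 1)))) =
          {x | ‖v x - vc (Sum.inr α)‖ < ε / (2 * (m + 1))} := by
        ext x
        simp [Metric.mem_ball, dist_eq_norm]
      rw [← hseteq]
      exact h2
    have hT := fatten_mem hS hΛc.isBounded
    have hW : {a : EuclideanSpace ℝ (Fin d) |
        ∫ x in (fun y => a + y) '' Λ, ‖w x‖ < ε / 2} ∈ rayConeFilter α :=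
      (hw0 α).eventually_lt_const (by positivity)
    filter_upwards [hT, hW] with a haT haW
    have hintv : IntegrableOn (fun x => ‖v x - vc (Sum.inr α)‖) ((fun y => a + y) '' Λ) :=
      hIntOn _ (Mu + Mw + ‖vc (Sum.inr α)‖) (hvcont.measurable.sub measurable_const)
        (fun x => (norm_sub_le _ _).trans (add_le_add_left (hvb x) _)) a
    have hintw : IntegrableOn (fun x => ‖w x‖) ((fun y => a + y) '' Λ) :=
      hIntOn w Mw hwm hMw a
    have h1 : ∫ x in (fun y => a + y) '' Λ, ‖u x - vc (Sum.inr α)‖ ≤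
        (∫ x in (fun y => a + y) '' Λ, ‖v x - vc (Sum.inr α)‖) +
          ∫ x in (fun y => a + y) '' Λ, ‖w x‖ := by
      have he : (fun x => ‖u x - vc (Sum.inr α)‖) =
          (fun x => ‖(v x - vc (Sum.inr α)) + w x‖) := by
        funext x
        congr 1
        rw [huvw x]
        ring
      rw [he]
      exact hMeanAdd (fun x => v x - vc (Sum.inr α)) w a
        (hvcont.measurable.sub measurable_const) hwm hintv hintw
    have h2 : ∫ x in (fun y => a + y) '' Λ, ‖v x - vc (Sum.inr α)‖ ≤ ε / (2 * (m + 1)) * m := by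
      apply hMeanLe _ _ a hintv
      rintro x ⟨y, hy, rfl⟩
      exact le_of_lt (haT y hy)
    have h3 : ε / (2 * (m + 1)) * m < ε / 2 := by
      rw [div_mul_eq_mul_div, div_lt_div_iff₀ (by positivity) (by norm_num)]
      nlinarith
    have h4 : ∫ x in (fun y => a + y) '' Λ, ‖w x‖ < ε / 2 := haW
    show ∫ x in (fun y => a + y) '' Λ, ‖u x - vc (Sum.inr α)‖ < ε
    linarith
  · intro hR
    choose c hc using hR
    have hcb : ∀ α, ‖c α‖ ≤ Mu := by
      intro α
      refine le_of_forall_pos_le_add ?_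
      intro ε hε
      have hS : {a : EuclideanSpace ℝ (Fin d) |
          ∫ x in (fun y => a + y) '' Λ, ‖u x - c α‖ < ε * m} ∈ rayConeFilter α :=
        (hc α).eventually_lt_const (by positivity)
      obtain ⟨b, hb0, hbray, hbmem⟩ := exists_mem_of_mem_filter hS
      have h1 : ∫ x in (fun y => b + y) '' Λ, ‖u x - c α‖ < ε * m := hbmem
      have h2 := hTwo (c α) 0 b
      rw [sub_zero] at h2
      have h3 : ∫ x in (fun y => b + y) '' Λ, ‖u x - 0‖ ≤ Mu * m := by
        apply hMeanLe _ _ b (by simpa using hIntU 0 b)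
        intro x _
        rw [sub_zero]
        exact hMu x
      nlinarith [hm0]
    have L1 : ∀ (α : Module.Ray ℝ (EuclideanSpace ℝ (Fin d))) (ε : ℝ), 0 < ε →
        ∃ C₀ : Set (EuclideanSpace ℝ (Fin d)), IsOpen C₀ ∧ IsTruncCone C₀ ∧ RayEvIn α C₀ ∧
          (∀ x ∈ C₀, 2 < ‖x‖) ∧
          ∀ x : EuclideanSpace ℝ (Fin d), ∀ hx : x ≠ 0, x ∈ C₀ →
            ‖c (rayOfNeZero ℝ x hx) - c α‖ ≤ ε := by
      intro α ε hε
      have hS : {a : EuclideanSpace ℝ (Fin d) |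
          ∫ x in (fun y => a + y) '' Λ, ‖u x - c α‖ < ε * m / 2} ∈ rayConeFilter α :=
        (hc α).eventually_lt_const (by positivity)
      obtain ⟨C, hCo, hCt, hCe, hCsub⟩ := exists_gen_subset hS
      refine ⟨C ∩ (Metric.closedBall 0 2)ᶜ, hCo.inter Metric.isClosed_closedBall.isOpen_compl,
        isTruncCone_inter hCt (isTruncCone_compl_closedBall 2),
        rayEvIn_inter hCe (rayEvIn_compl_closedBall α 2), ?_, ?_⟩
      · rintro x ⟨-, hx2⟩
        simpa [Metric.mem_closedBall, dist_zero_right] using hx2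
      · intro x hx hxC
        have hβ : RayEvIn (rayOfNeZero ℝ x hx) (C ∩ (Metric.closedBall 0 2)ᶜ) :=
          rayEvIn_of_mem_truncCone
            (isTruncCone_inter hCt (isTruncCone_compl_closedBall 2)) hxC hx
        have hmem : (C ∩ (Metric.closedBall 0 2)ᶜ) ∈ rayConeFilter (rayOfNeZero ℝ x hx) :=
          mem_rayConeFilter_of_gen (hCo.inter Metric.isClosed_closedBall.isOpen_compl)
            (isTruncCone_inter hCt (isTruncCone_compl_closedBall 2)) hβ
        have hSβ : {a : EuclideanSpace ℝ (Fin d) |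
            ∫ y in (fun y => a + y) '' Λ, ‖u y - c (rayOfNeZero ℝ x hx)‖ < ε * m / 2} ∈
              rayConeFilter (rayOfNeZero ℝ x hx) :=
          (hc _).eventually_lt_const (by positivity)
        obtain ⟨b, hb0, hbray, hbmem⟩ := exists_mem_of_mem_filter (inter_mem hmem hSβ)
        have h1 : ∫ y in (fun y => b + y) '' Λ, ‖u y - c α‖ < ε * m / 2 := hCsub hbmem.1.1
        have h2 : ∫ y in (fun y => b + y) '' Λ, ‖u y - c (rayOfNeZero ℝ x hx)‖ < ε * m / 2 :=
          hbmem.2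
        have h3 := hTwo (c (rayOfNeZero ℝ x hx)) (c α) b
        nlinarith [hm0]
    set ψ : ℝ → ℝ := fun t => max 0 (min 1 (t - 1)) with hψdef
    have hψcont : Continuous ψ :=
      continuous_const.max (continuous_const.min (continuous_id.sub continuous_const))
    have hψ0 : ∀ t : ℝ, t ≤ 1 → ψ t = 0 := by
      intro t ht
      simp only [hψdef]
      exact max_eq_left ((min_le_right _ _).trans (by linarith))
    have hψ1 : ∀ t : ℝ, 2 ≤ t → ψ t = 1 := by
      intro t ht
      simp only [hψdef]
      rw [min_eq_left (by linarith)]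
      exact max_eq_right (by norm_num)
    have hψub : ∀ t : ℝ, |ψ t| ≤ 1 := by
      intro t
      simp only [hψdef]
      rw [abs_of_nonneg (le_max_left _ _)]
      exact max_le (by norm_num) (min_le_left _ _)
    set c' : EuclideanSpace ℝ (Fin d) → ℂ :=
      fun x => if hx : x = 0 then 0 else c (rayOfNeZero ℝ x hx) with hc'def
    have hc'b : ∀ x, ‖c' x‖ ≤ Mu := by
      intro x
      simp only [hc'def]
      by_cases hx : x = 0
      · simp [hx, hMu0]
      · rw [dif_neg hx]
        exact hcb _
    have hc'val : ∀ (x : EuclideanSpace ℝ (Fin d)) (hx : x ≠ 0),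
        c' x = c (rayOfNeZero ℝ x hx) := by
      intro x hx
      simp only [hc'def]
      rw [dif_neg hx]
    have hc'cont : ∀ x₀ : EuclideanSpace ℝ (Fin d), x₀ ≠ 0 → ContinuousAt c' x₀ := by
      intro x₀ hx₀
      rw [Metric.continuousAt_iff]
      intro ε hε
      obtain ⟨C₀, hC₀o, hC₀t, hC₀e, hC₀n, hC₀p⟩ :=
        L1 (rayOfNeZero ℝ x₀ hx₀) (ε/3) (by linarith)
      obtain ⟨a, ha0, haray, ham⟩ := hC₀e
      have haC : a ∈ C₀ := by simpa using ham 1 le_rfl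
      obtain ⟨δ, hδ0, hδ⟩ := Metric.isOpen_iff.mp hC₀o a haC
      obtain ⟨t, ht0, hta⟩ := ((ray_eq_iff ha0 hx₀).mp haray).exists_pos_right ha0 hx₀
      refine ⟨δ / t, by positivity, ?_⟩
      intro x hxd
      have htx : t • x ∈ C₀ := by
        apply hδ
        rw [Metric.mem_ball]
        have hde : dist (t • x) a = t * dist x x₀ := by
          rw [hta, dist_smul₀, Real.norm_eq_abs, abs_of_pos ht0]
        rw [hde]
        calc t * dist x x₀ < t * (δ / t) := mul_lt_mul_of_pos_left hxd ht0
          _ = δ := by field_simp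
      have htx0 : t • x ≠ 0 := by
        intro h
        have h2 := hC₀n _ htx
        rw [h, norm_zero] at h2
        linarith
      have hx0 : x ≠ 0 := by
        intro h
        apply htx0
        rw [h, smul_zero]
      have h1 := hC₀p (t • x) htx0 htx
      rw [ray_pos_smul hx0 ht0] at h1
      rw [hc'val x hx0, hc'val x₀ hx₀, dist_eq_norm]
      calc ‖c (rayOfNeZero ℝ x hx0) - c (rayOfNeZero ℝ x₀ hx₀)‖ ≤ ε/3 := h1
        _ < ε := by linarith
    set v : EuclideanSpace ℝ (Fin d) → ℂ := fun x => (ψ ‖x‖ : ℝ) * c' x with hvdef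
    have hvb : ∀ x, ‖v x‖ ≤ Mu := by
      intro x
      simp only [hvdef]
      rw [norm_mul, Complex.norm_real, Real.norm_eq_abs]
      calc |ψ ‖x‖| * ‖c' x‖ ≤ 1 * Mu :=
            mul_le_mul (hψub _) (hc'b x) (norm_nonneg _) zero_le_one
        _ = Mu := one_mul _
    have hveq : ∀ x : EuclideanSpace ℝ (Fin d), 2 ≤ ‖x‖ → v x = c' x := by
      intro x hx
      simp only [hvdef]
      rw [hψ1 _ hx]
      simp
    have hvcont : Continuous v := by
      rw [continuous_iff_continuousAt]
      intro x₀
      by_cases hx₀ : x₀ = 0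
      · subst hx₀
        have hloc : ∀ x ∈ Metric.ball (0 : EuclideanSpace ℝ (Fin d)) 1, v x = 0 := by
          intro x hx
          have hn : ‖x‖ < 1 := by simpa [dist_zero_right] using hx
          simp only [hvdef]
          rw [hψ0 _ hn.le]
          simp
        have heq : v =ᶠ[nhds (0 : EuclideanSpace ℝ (Fin d))] (fun _ => (0:ℂ)) :=
          eventuallyEq_of_mem (Metric.ball_mem_nhds 0 one_pos) hloc
        exact ContinuousAt.congr continuousAt_const heq.symm
      · exact ContinuousAt.mul
          ((Complex.continuous_ofReal.comp (hψcont.comp continuous_norm)).continuousAt)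
          (hc'cont x₀ hx₀)
    set vc : SphComp (EuclideanSpace ℝ (Fin d)) → ℂ := Sum.elim v c with hvcdef
    have hvccont : @Continuous _ _ instSphCompTop _ vc := by
      rw [continuous_def]
      intro W hW
      rw [isOpen_iff_forall_mem_open]
      rintro (x | α) hp
      · have hpx : v x ∈ W := hp
        obtain ⟨ε, hε0, hball⟩ := Metric.isOpen_iff.mp hW (v x) hpx
        refine ⟨Sum.inl '' (v ⁻¹' Metric.ball (v x) ε), ?_,
          isOpen_inl_image (Metric.isOpen_ball.preimage hvcont),
          ⟨x, Metric.mem_ball_self hε0, rfl⟩⟩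
        rintro p ⟨y, hy, rfl⟩
        exact hball hy
      · have hpα : c α ∈ W := hp
        obtain ⟨ε, hε0, hball⟩ := Metric.isOpen_iff.mp hW (c α) hpα
        obtain ⟨C₀, hC₀o, hC₀t, hC₀e, hC₀n, hC₀p⟩ := L1 α (ε/2) (by positivity)
        refine ⟨Sum.inl '' C₀ ∪ Sum.inr '' {β | RayEvIn β C₀}, ?_,
          isOpen_cone_nbhd hC₀o hC₀t, Or.inr ⟨α, hC₀e, rfl⟩⟩
        rintro p (⟨y, hy, rfl⟩ | ⟨β, hβ, rfl⟩)
        · apply hball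
          have hy2 : 2 < ‖y‖ := hC₀n y hy
          have hy0 : y ≠ 0 := by
            intro h
            rw [h, norm_zero] at hy2
            linarith
          show v y ∈ Metric.ball (c α) ε
          rw [Metric.mem_ball, hveq y hy2.le, hc'val y hy0, dist_eq_norm]
          calc ‖c (rayOfNeZero ℝ y hy0) - c α‖ ≤ ε/2 := hC₀p y hy0 hy
            _ < ε := by linarith
        · apply hball
          obtain ⟨b, hb0, hbray, hbm⟩ := hβ
          have hbC : b ∈ C₀ := by simpa using hbm 1 le_rfl
          have h1 := hC₀p b hb0 hbC
          rw [hbray] at h1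
          show c β ∈ Metric.ball (c α) ε
          rw [Metric.mem_ball, dist_eq_norm]
          calc ‖c β - c α‖ ≤ ε/2 := h1
            _ < ε := by linarith
    refine ⟨v, fun x => u x - v x, ⟨⟨vc, hvccont⟩, fun x => rfl⟩,
      ⟨huM.sub hvcont.measurable, Mu + Mu,
        fun x => (norm_sub_le _ _).trans (add_le_add (hMu x) (hvb x))⟩, ?_,
      fun x => by ring⟩
    intro α
    apply hTendsto0 _ _ (fun a => hMean0 _ a (fun x => norm_nonneg _))
    intro ε hε
    have hε₂0 : 0 < ε / (2 * (m + 1)) := by positivity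
    obtain ⟨C₀, hC₀o, hC₀t, hC₀e, hC₀n, hC₀p⟩ := L1 α (ε / (2 * (m + 1))) hε₂0
    have hC₀mem : C₀ ∈ rayConeFilter α := mem_rayConeFilter_of_gen hC₀o hC₀t hC₀e
    have hT := fatten_mem hC₀mem hΛc.isBounded
    have hS : {a : EuclideanSpace ℝ (Fin d) |
        ∫ x in (fun y => a + y) '' Λ, ‖u x - c α‖ < ε / 2} ∈ rayConeFilter α :=
      (hc α).eventually_lt_const (by positivity)
    filter_upwards [hT, hS] with a haT haS
    have hintu := hIntU (c α) a
    have hintv : IntegrableOn (fun x => ‖c α - v x‖) ((fun y => a + y) '' Λ) :=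
      hIntOn (fun x => c α - v x) (‖c α‖ + Mu) (measurable_const.sub hvcont.measurable)
        (fun x => (norm_sub_le _ _).trans (add_le_add_right (hvb x) _)) a
    have h1 : ∫ x in (fun y => a + y) '' Λ, ‖u x - v x‖ ≤
        (∫ x in (fun y => a + y) '' Λ, ‖u x - c α‖) +
          ∫ x in (fun y => a + y) '' Λ, ‖c α - v x‖ := by
      have he : (fun x => ‖u x - v x‖) = (fun x => ‖(u x - c α) + (c α - v x)‖) := by
        funext x
        congr 1
        ring
      rw [he]
      exact hMeanAdd (fun x => u x - c α) (fun x => c α - v x) a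
        (huM.sub measurable_const) (measurable_const.sub hvcont.measurable) hintu hintv
    have h2 : ∫ x in (fun y => a + y) '' Λ, ‖c α - v x‖ ≤ ε / (2 * (m + 1)) * m := by
      apply hMeanLe _ _ a hintv
      rintro x ⟨y, hy, rfl⟩
      have hxC : a + y ∈ C₀ := haT y hy
      have hx2 : 2 < ‖a + y‖ := hC₀n _ hxC
      have hx0 : a + y ≠ 0 := by
        intro h
        rw [h, norm_zero] at hx2
        linarith
      rw [norm_sub_rev, hveq _ hx2.le, hc'val _ hx0]
      exact hC₀p _ hx0 hxC
    have h3 : ε / (2 * (m + 1)) * m < ε / 2 := by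
      rw [div_mul_eq_mul_div, div_lt_div_iff₀ (by positivity) (by norm_num)]
      nlinarith
    have h4 : ∫ x in (fun y => a + y) '' Λ, ‖u x - c α‖ < ε / 2 := haS
    show ∫ x in (fun y => a + y) '' Λ, ‖u x - v x‖ < ε
    linarith
end
end

section
/- Let X be a finite-dimensional real vector space, ℰ(X) as above, and let α₁, …, α_n be half-lines generating a subspace Y of X. Then ℰ(X/Y) = ℰ(X/[α₁]) ∩ ⋯ ∩ ℰ(X/[α_n]), and the composed morphism τ_{α₁}τ_{α₂}⋯τ_{α_n} is a linear projection of ℰ(X) onto ℰ(X/Y). -/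
open Filter Topology Set MeasureTheory Bornology BoundedContinuousFunction

noncomputable section

-- Auxiliary lemma: convergence to a point at infinity in the spherical compactification.
lemma tendsto_inl_sphComp {Q : Type*} [SeminormedAddCommGroup Q] [NormedSpace ℝ Q]
    (b : Q) (hb : b ≠ 0) (hbn : 0 < ‖b‖) (x : Q) :
    Tendsto (fun r : ℝ => (Sum.inl (r • b + x) : SphComp Q)) atTop
      (@nhds (SphComp Q) instSphCompTop (Sum.inr (rayOfNeZero ℝ b hb))) := by
  apply TopologicalSpace.tendsto_nhds_generateFrom_iff.mpr
  rintro s (⟨O, hO, rfl⟩ | ⟨C, hCopen, ⟨D, B, hD, hB, rfl⟩, rfl⟩) hmem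
  · rcases hmem with ⟨y, -, hy⟩; exact absurd hy (by simp)
  · have hray : RayEvIn (rayOfNeZero ℝ b hb) (D ∩ Bᶜ) := by
      rcases hmem with ⟨y, -, hy⟩ | ⟨α, hα, hy⟩
      · exact absurd hy (by simp)
      · rw [Sum.inr.injEq] at hy; rwa [hy] at hα
    obtain ⟨a', ha', hrayeq, hcone⟩ := hray
    obtain ⟨t, ht, htb⟩ := ((ray_eq_iff ha' hb).mp hrayeq).exists_pos_left ha' hb
    have ha'C : a' ∈ D ∩ Bᶜ := by simpa using hcone 1 le_rfl
    obtain ⟨ε, hε, hball⟩ := Metric.isOpen_iff.mp hCopen a' ha'C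
    have hna' : 0 < ‖a'‖ := by
      rcases (norm_nonneg a').lt_or_eq with h | h; · exact h
      exfalso
      have : ‖b‖ = t * ‖a'‖ := by
        rw [← htb, norm_smul, Real.norm_of_nonneg ht.le]
      rw [← h] at this; nlinarith
    obtain ⟨R, hR⟩ := hB.exists_norm_le
    have h1 : ∀ᶠ r : ℝ in atTop, ‖x‖ < r * t * ε :=
      ((tendsto_id.atTop_mul_const ht).atTop_mul_const hε).eventually_gt_atTop ‖x‖
    have h2 : ∀ᶠ r : ℝ in atTop, R + ‖x‖ < r * t * ‖a'‖ :=
      ((tendsto_id.atTop_mul_const ht).atTop_mul_const hna').eventually_gt_atTop (R + ‖x‖)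
    filter_upwards [h1, h2] with r hr1 hr2
    have hmemC : r • b + x ∈ D ∩ Bᶜ := by
      set τ : ℝ := r * t with hτdef
      have hτ : 0 < τ := by
        rcases le_or_gt τ 0 with h | h
        · exfalso; nlinarith [norm_nonneg x]
        · exact h
      have hrw : r • b + x = τ • (a' + τ⁻¹ • x) := by
        rw [smul_add, smul_inv_smul₀ hτ.ne', ← htb, smul_smul]
      constructor
      · rw [hrw]
        refine hD _ ?_ τ hτ
        have : a' + τ⁻¹ • x ∈ Metric.ball a' ε := by
          rw [Metric.mem_ball, dist_eq_norm]
          have : a' + τ⁻¹ • x - a' = τ⁻¹ • x := by abel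
          rw [this, norm_smul, Real.norm_of_nonneg (inv_nonneg.mpr hτ.le)]
          rw [inv_mul_lt_iff₀ hτ]
          linarith [hr1]
        exact (hball this).1
      · intro hmB
        have hub := hR _ hmB
        have hlow : ‖r • b + x‖ ≥ τ * ‖a'‖ - ‖x‖ := by
          have h3 : ‖τ • a'‖ ≤ ‖r • b + x‖ + ‖x‖ := by
            have : τ • a' = (r • b + x) - x := by rw [← htb, smul_smul]; abel
            rw [this]; exact norm_sub_le _ _
          rw [norm_smul, Real.norm_of_nonneg hτ.le] at h3; linarith
        linarith
    exact Or.inl ⟨r • b + x, hmemC, rfl⟩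

section Algebras
variable (X : Type*) [NormedAddCommGroup X] [NormedSpace ℝ X]

/-- Generators `u ∘ π_Z`, `u ∈ C(overline{X/Z})`, over all subspaces `Z ⊇ Y`. -/
def QGenSet (Y : Submodule ℝ X) : Set (X →ᵇ ℂ) :=
  {u | ∃ Z : Submodule ℝ X, Y ≤ Z ∧ ∃ v : C(SphComp (X ⧸ Z), ℂ),
      ∀ x : X, u x = v (Sum.inl (Submodule.Quotient.mk x))}

/-- The C*-algebra `ℰ(X/Y)`, realized inside the bounded continuous functions on `X`. -/
def EAlgY (Y : Submodule ℝ X) : StarSubalgebra ℂ (X →ᵇ ℂ) :=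
  (StarAlgebra.adjoin ℂ (QGenSet X Y)).topologicalClosure

/-- The C*-algebra `ℰ(X)` of elementary interactions. -/
abbrev EAlg : StarSubalgebra ℂ (X →ᵇ ℂ) := EAlgY X ⊥

end Algebras

section Aux2
variable {X : Type*} [NormedAddCommGroup X] [NormedSpace ℝ X]

lemma QGenSet_anti {W Y : Submodule ℝ X} (h : W ≤ Y) : QGenSet X Y ⊆ QGenSet X W :=
  fun _ ⟨Z, hZ, v, hv⟩ => ⟨Z, h.trans hZ, v, hv⟩

lemma QGenSet_subset_EAlgY (Y : Submodule ℝ X) : QGenSet X Y ⊆ (EAlgY X Y : Set (X →ᵇ ℂ)) :=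
  fun _ hu => (StarAlgebra.adjoin ℂ (QGenSet X Y)).le_topologicalClosure
    (StarAlgebra.subset_adjoin ℂ _ hu)

lemma EAlgY_anti {W Y : Submodule ℝ X} (h : W ≤ Y) : EAlgY X Y ≤ EAlgY X W :=
  StarSubalgebra.topologicalClosure_mono
    (StarAlgebra.adjoin_le ((QGenSet_anti h).trans (StarAlgebra.subset_adjoin ℂ _)))

/-- The closed star subalgebra of functions invariant under translations from `Y`. -/
def invAlg (Y : Submodule ℝ X) : StarSubalgebra ℂ (X →ᵇ ℂ) where
  carrier := {u : X →ᵇ ℂ | ∀ z ∈ Y, ∀ x, u (z + x) = u x}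
  mul_mem' := fun {u v} hu hv z hz x => by simp [hu z hz x, hv z hz x]
  one_mem' := fun z hz x => rfl
  add_mem' := fun {u v} hu hv z hz x => by simp [hu z hz x, hv z hz x]
  zero_mem' := fun z hz x => rfl
  algebraMap_mem' := fun c z hz x => rfl
  star_mem' := fun {u} hu z hz x => by simp [hu z hz x]

lemma isClosed_invAlg (Y : Submodule ℝ X) : IsClosed (invAlg Y : Set (X →ᵇ ℂ)) := by
  have : (invAlg Y : Set (X →ᵇ ℂ)) = ⋂ (z : X) (_ : z ∈ Y) (x : X),
      {u : X →ᵇ ℂ | u (z + x) = u x} := by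
    ext u; simp only [SetLike.mem_coe, Set.mem_iInter, Set.mem_setOf_eq]; exact Iff.rfl
  rw [this]
  exact isClosed_iInter fun z => isClosed_iInter fun _ => isClosed_iInter fun x =>
    isClosed_eq (continuous_eval_const (z + x)) (continuous_eval_const x)

lemma EAlgY_invariant {Y : Submodule ℝ X} {u : X →ᵇ ℂ} (hu : u ∈ EAlgY X Y)
    {z : X} (hz : z ∈ Y) (x : X) : u (z + x) = u x := by
  have hle : EAlgY X Y ≤ invAlg Y := by
    refine StarSubalgebra.topologicalClosure_minimal (StarAlgebra.adjoin_le ?_) (isClosed_invAlg Y)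
    rintro w ⟨Z, hZ, v, hv⟩ z hz x
    rw [hv, hv]
    congr 2
    rw [show z + x = z + x from rfl, Submodule.Quotient.mk_add,
      (Submodule.Quotient.mk_eq_zero Z).mpr (hZ hz), zero_add]
  exact hle hu z hz x

variable [FiniteDimensional ℝ X]

set_option synthInstance.maxHeartbeats 1000000 in
lemma exists_limit (W : Submodule ℝ X) (a : X) {u : X →ᵇ ℂ} (hu : u ∈ EAlgY X W) :
    ∃ w : X →ᵇ ℂ, w ∈ EAlgY X (W ⊔ Submodule.span ℝ {a}) ∧
      ∀ x : X, Tendsto (fun r : ℝ => u (r • a + x)) atTop (𝓝 (w x)) := by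
  set W' := W ⊔ Submodule.span ℝ {a} with hW'
  have step1 : ∀ u₀ ∈ StarAlgebra.adjoin ℂ (QGenSet X W), ∃ w : X →ᵇ ℂ,
      w ∈ EAlgY X W' ∧ ∀ x, Tendsto (fun r : ℝ => u₀ (r • a + x)) atTop (𝓝 (w x)) := by
    intro u₀ hu₀
    induction hu₀ using StarAlgebra.adjoin_induction with
    | mem u₁ hu₁ =>
      obtain ⟨Z, hWZ, v, hv⟩ := hu₁
      by_cases haZ : a ∈ Z
      · refine ⟨u₁, QGenSet_subset_EAlgY W' ⟨Z, ?_, v, hv⟩, fun x => ?_⟩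
        · exact sup_le hWZ ((Submodule.span_singleton_le_iff_mem a Z).mpr haZ)
        · have hconst : ∀ r : ℝ, u₁ (r • a + x) = u₁ x := fun r => by
            rw [hv, hv]; congr 2
            rw [Submodule.Quotient.mk_add,
              (Submodule.Quotient.mk_eq_zero Z).mpr (Z.smul_mem r haZ), zero_add]
          rw [show (fun r : ℝ => u₁ (r • a + x)) = fun _ => u₁ x from funext hconst]
          exact tendsto_const_nhds
      · have hb : (Submodule.Quotient.mk a : X ⧸ Z) ≠ 0 := fun h =>
          haZ ((Submodule.Quotient.mk_eq_zero Z).mp h)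
        have hbn : 0 < ‖(Submodule.Quotient.mk a : X ⧸ Z)‖ := by
          rcases (norm_nonneg (Submodule.Quotient.mk a : X ⧸ Z)).lt_or_eq with h | h
          · exact h
          · exfalso
            apply haZ
            have hcl : IsClosed (Z : Set X) := Submodule.closed_of_finiteDimensional Z
            have h0 := (QuotientAddGroup.norm_mk_eq_zero_iff_mem_closure (S := Z.toAddSubgroup) (m := a)).mp h.symm
            rw [Submodule.coe_toAddSubgroup, hcl.closure_eq] at h0
            exact h0
        refine ⟨BoundedContinuousFunction.const X (v (Sum.inr (rayOfNeZero ℝ _ hb))), ?_,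
          fun x => ?_⟩
        · have hconst : BoundedContinuousFunction.const X (v (Sum.inr (rayOfNeZero ℝ _ hb))) =
              algebraMap ℂ (X →ᵇ ℂ) (v (Sum.inr (rayOfNeZero ℝ _ hb))) := by
            ext y; simp [Algebra.algebraMap_eq_smul_one]
          rw [hconst]; exact (EAlgY X W').algebraMap_mem _
        · have hc := (v.continuous.tendsto (Sum.inr (rayOfNeZero ℝ _ hb))).comp
            (tendsto_inl_sphComp (Submodule.Quotient.mk a) hb hbn (Submodule.Quotient.mk x))
          have heq : (fun r : ℝ => u₁ (r • a + x)) = fun r : ℝ =>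
              v (Sum.inl ((r • (Submodule.Quotient.mk a : X ⧸ Z)) + Submodule.Quotient.mk x)) := by
            funext r; rw [hv, Submodule.Quotient.mk_add, Submodule.Quotient.mk_smul]
          rw [heq]
          exact hc
    | algebraMap c =>
      refine ⟨algebraMap ℂ (X →ᵇ ℂ) c, (EAlgY X W').algebraMap_mem c, fun x => ?_⟩
      have hc : ∀ y : X, (algebraMap ℂ (X →ᵇ ℂ) c) y = c := fun y => by
        simp [Algebra.algebraMap_eq_smul_one]
      simp only [hc]; exact tendsto_const_nhds
    | add u₁ u₂ h₁ h₂ ih₁ ih₂ =>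
      obtain ⟨w₁, hw₁, hl₁⟩ := ih₁
      obtain ⟨w₂, hw₂, hl₂⟩ := ih₂
      refine ⟨w₁ + w₂, add_mem hw₁ hw₂, fun x => ?_⟩
      have := (hl₁ x).add (hl₂ x)
      simpa using this
    | mul u₁ u₂ h₁ h₂ ih₁ ih₂ =>
      obtain ⟨w₁, hw₁, hl₁⟩ := ih₁
      obtain ⟨w₂, hw₂, hl₂⟩ := ih₂
      refine ⟨w₁ * w₂, mul_mem hw₁ hw₂, fun x => ?_⟩
      have := (hl₁ x).mul (hl₂ x)
      simpa using this
    | star u₁ h₁ ih =>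
      obtain ⟨w₁, hw₁, hl₁⟩ := ih
      refine ⟨star w₁, star_mem hw₁, fun x => ?_⟩
      have := (hl₁ x).star
      simpa using this
  -- Step 2: pass to the closure
  have hu' : u ∈ closure ((StarAlgebra.adjoin ℂ (QGenSet X W) : StarSubalgebra ℂ (X →ᵇ ℂ)) :
      Set (X →ᵇ ℂ)) := hu
  obtain ⟨seq, hseqmem, hseqlim⟩ := mem_closure_iff_seq_limit.mp hu'
  choose w hwmem hwlim using fun k => step1 (seq k) (hseqmem k)
  have key : ∀ k j, dist (w k) (w j) ≤ dist (seq k) (seq j) := by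
    intro k j
    refine (BoundedContinuousFunction.dist_le dist_nonneg).mpr fun x => ?_
    have hd : Tendsto (fun r : ℝ => dist (seq k (r • a + x)) (seq j (r • a + x))) atTop
        (𝓝 (dist (w k x) (w j x))) := (hwlim k x).dist (hwlim j x)
    exact le_of_tendsto hd (Eventually.of_forall fun r =>
      BoundedContinuousFunction.dist_coe_le_dist _)
  have hc : CauchySeq w := by
    have hcs : CauchySeq seq := hseqlim.cauchySeq
    rw [Metric.cauchySeq_iff] at hcs ⊢
    intro ε hε
    obtain ⟨N, hN⟩ := hcs ε hε
    exact ⟨N, fun m hm n hn => lt_of_le_of_lt (key m n) (hN m hm n hn)⟩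
  obtain ⟨winf, hwinf⟩ := cauchySeq_tendsto_of_complete hc
  refine ⟨winf, ?_, fun x => ?_⟩
  · exact (StarAlgebra.adjoin ℂ (QGenSet X W')).isClosed_topologicalClosure.mem_of_tendsto
      hwinf (Eventually.of_forall hwmem)
  · rw [Metric.tendsto_nhds]
    intro ε hε
    obtain ⟨k₁, hk₁⟩ := Metric.tendsto_atTop.mp hseqlim (ε / 4) (by positivity)
    obtain ⟨k₂, hk₂⟩ := Metric.tendsto_atTop.mp hwinf (ε / 4) (by positivity)
    set k := max k₁ k₂ with hk
    have hku : dist (seq k) u < ε / 4 := hk₁ k (le_max_left _ _)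
    have hkw : dist (w k) winf < ε / 4 := hk₂ k (le_max_right _ _)
    filter_upwards [Metric.tendsto_nhds.mp (hwlim k x) (ε / 4) (by positivity)] with r hr
    have d1 : dist (u (r • a + x)) (seq k (r • a + x)) ≤ dist (seq k) u := by
      rw [dist_comm]
      exact BoundedContinuousFunction.dist_coe_le_dist _
    have d3 : dist (w k x) (winf x) ≤ dist (w k) winf :=
      BoundedContinuousFunction.dist_coe_le_dist _
    calc dist (u (r • a + x)) (winf x) ≤ dist (u (r • a + x)) (seq k (r • a + x)) +
          dist (seq k (r • a + x)) (w k x) + dist (w k x) (winf x) := dist_triangle4 _ _ _ _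
      _ < ε := by linarith

end Aux2


/-- Composition `T 0 ∘ T 1 ∘ ⋯ ∘ T (n-1)` of a finite family of maps. -/
def composeFam {A : Type*} : ∀ {n : ℕ}, (Fin n → (A → A)) → (A → A)
  | 0, _ => id
  | _ + 1, T => T 0 ∘ composeFam (fun i => T i.succ)

section Aux3
variable {X : Type*} [NormedAddCommGroup X] [NormedSpace ℝ X] [FiniteDimensional ℝ X]

lemma Tstep {a₀ : X} {T₀ : (X →ᵇ ℂ) → (X →ᵇ ℂ)}
    (hT : ∀ u ∈ EAlg X, ∀ x : X, Tendsto (fun r : ℝ => u (r • a₀ + x)) atTop (𝓝 (T₀ u x)))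
    (W : Submodule ℝ X) {u : X →ᵇ ℂ} (hu : u ∈ EAlgY X W) :
    T₀ u ∈ EAlgY X (W ⊔ Submodule.span ℝ {a₀}) := by
  have huE : u ∈ EAlg X := EAlgY_anti bot_le hu
  obtain ⟨w, hw, hl⟩ := exists_limit W a₀ hu
  have heq : T₀ u = w := by
    ext x
    exact tendsto_nhds_unique (hT u huE x) (hl x)
  rw [heq]; exact hw

lemma Tfix {a₀ : X} {T₀ : (X →ᵇ ℂ) → (X →ᵇ ℂ)}
    (hT : ∀ u ∈ EAlg X, ∀ x : X, Tendsto (fun r : ℝ => u (r • a₀ + x)) atTop (𝓝 (T₀ u x)))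
    {u : X →ᵇ ℂ} (hu : u ∈ EAlg X) (hinv : ∀ (r : ℝ) (x : X), u (r • a₀ + x) = u x) :
    T₀ u = u := by
  ext x
  refine tendsto_nhds_unique (hT u hu x) ?_
  rw [show (fun r : ℝ => u (r • a₀ + x)) = fun _ => u x from funext fun r => hinv r x]
  exact tendsto_const_nhds

lemma comp_mem : ∀ (n : ℕ) (a : Fin n → X) (T : Fin n → ((X →ᵇ ℂ) → (X →ᵇ ℂ))),
    (∀ i, ∀ u ∈ EAlg X, ∀ x : X,
      Tendsto (fun r : ℝ => u (r • a i + x)) atTop (𝓝 (T i u x))) →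
    ∀ u ∈ EAlg X, composeFam T u ∈ EAlgY X (Submodule.span ℝ (Set.range a))
  | 0, a, T, hT, u, hu => by
    have : Set.range a = ∅ := Set.range_eq_empty a
    rw [this, Submodule.span_empty]
    exact hu
  | n + 1, a, T, hT, u, hu => by
    have ih := comp_mem n (fun i => a i.succ) (fun i => T i.succ) (fun i => hT i.succ) u hu
    have step := Tstep (hT 0) _ ih
    have hrange : Set.range a = insert (a 0) (Set.range fun i : Fin n => a i.succ) := by
      rw [Fin.range_fin_succ]; rfl
    rw [hrange, Submodule.span_insert, sup_comm]
    exact step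

lemma comp_memE (n : ℕ) (a : Fin n → X) (T : Fin n → ((X →ᵇ ℂ) → (X →ᵇ ℂ)))
    (hT : ∀ i, ∀ u ∈ EAlg X, ∀ x : X,
      Tendsto (fun r : ℝ => u (r • a i + x)) atTop (𝓝 (T i u x)))
    {u : X →ᵇ ℂ} (hu : u ∈ EAlg X) : composeFam T u ∈ EAlg X :=
  EAlgY_anti bot_le (comp_mem n a T hT u hu)

lemma comp_fix : ∀ (n : ℕ) (T : Fin n → ((X →ᵇ ℂ) → (X →ᵇ ℂ))) (u : X →ᵇ ℂ),
    (∀ i, T i u = u) → composeFam T u = u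
  | 0, T, u, _ => rfl
  | n + 1, T, u, h => by
    show T 0 (composeFam (fun i => T i.succ) u) = u
    rw [comp_fix n _ u fun i => h i.succ, h 0]

lemma Tlinear {a₀ : X} {T₀ : (X →ᵇ ℂ) → (X →ᵇ ℂ)}
    (hT : ∀ u ∈ EAlg X, ∀ x : X, Tendsto (fun r : ℝ => u (r • a₀ + x)) atTop (𝓝 (T₀ u x)))
    {u v : X →ᵇ ℂ} (hu : u ∈ EAlg X) (hv : v ∈ EAlg X) (c : ℂ) :
    T₀ (c • u + v) = c • T₀ u + T₀ v := by
  have hcv : c • u + v ∈ EAlg X := add_mem (SMulMemClass.smul_mem c hu) hv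
  ext x
  have h2 : Tendsto (fun r : ℝ => (c • u + v) (r • a₀ + x)) atTop
      (𝓝 (c • T₀ u x + T₀ v x)) := by
    have := ((hT u hu x).const_smul c).add (hT v hv x)
    simpa using this
  have := tendsto_nhds_unique (hT _ hcv x) h2
  simpa using this

lemma comp_linear : ∀ (n : ℕ) (a : Fin n → X) (T : Fin n → ((X →ᵇ ℂ) → (X →ᵇ ℂ))),
    (∀ i, ∀ u ∈ EAlg X, ∀ x : X,
      Tendsto (fun r : ℝ => u (r • a i + x)) atTop (𝓝 (T i u x))) →
    ∀ u ∈ EAlg X, ∀ v ∈ EAlg X, ∀ c : ℂ,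
      composeFam T (c • u + v) = c • composeFam T u + composeFam T v
  | 0, a, T, hT, u, hu, v, hv, c => rfl
  | n + 1, a, T, hT, u, hu, v, hv, c => by
    show T 0 (composeFam (fun i => T i.succ) (c • u + v)) = _
    rw [comp_linear n (fun i => a i.succ) (fun i => T i.succ) (fun i => hT i.succ) u hu v hv c]
    exact Tlinear (hT 0) (comp_memE n _ _ (fun i => hT i.succ) hu)
      (comp_memE n _ _ (fun i => hT i.succ) hv) c

end Aux3

/-- if the half-lines directed by `a 0, …, a (n-1)` generate `Y`,
then `ℰ(X/Y) = ℰ(X/[α₁]) ∩ ⋯ ∩ ℰ(X/[α_n])`, and the composition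
`τ_{α₁} ∘ ⋯ ∘ τ_{α_n}` is a linear projection of `ℰ(X)` onto `ℰ(X/Y)`. -/
theorem statement12 {X : Type*} [NormedAddCommGroup X] [NormedSpace ℝ X]
    [FiniteDimensional ℝ X] (n : ℕ) (hn : 0 < n)
    (a : Fin n → X) (ha : ∀ i, a i ≠ 0) (Y : Submodule ℝ X)
    (hgen : Submodule.span ℝ (Set.range a) = Y) :
    ((EAlgY X Y : Set (X →ᵇ ℂ)) =
        ⋂ i : Fin n, (EAlgY X (Submodule.span ℝ {a i}) : Set (X →ᵇ ℂ))) ∧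
    (∀ T : Fin n → ((X →ᵇ ℂ) → (X →ᵇ ℂ)),
      (∀ i, ∀ u ∈ EAlg X, ∀ x : X,
          Filter.Tendsto (fun r : ℝ => u (r • a i + x)) Filter.atTop (nhds (T i u x))) →
      (∀ i, ∀ u ∈ EAlg X, T i u ∈ EAlg X) →
      (∀ u ∈ EAlg X, composeFam T u ∈ EAlgY X Y) ∧
      (∀ u ∈ EAlg X, ∀ v ∈ EAlg X, ∀ c : ℂ,
          composeFam T (c • u + v) = c • composeFam T u + composeFam T v) ∧
      (∀ u : X →ᵇ ℂ, u ∈ EAlgY X Y → composeFam T u = u)) := by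
  have haY : ∀ i, a i ∈ Y := fun i => hgen ▸ Submodule.subset_span (Set.mem_range_self i)
  have hsle : ∀ i, Submodule.span ℝ {a i} ≤ Y := fun i =>
    (Submodule.span_singleton_le_iff_mem _ _).mpr (haY i)
  constructor
  · ext u
    simp only [Set.mem_iInter, SetLike.mem_coe]
    constructor
    · intro hu i
      exact EAlgY_anti (hsle i) hu
    · intro hu
      -- u is invariant under each translation r • a i
      have hinv : ∀ i, ∀ (r : ℝ) (x : X), u (r • a i + x) = u x := fun i r x =>
        EAlgY_invariant (hu i) (Submodule.smul_mem _ r (Submodule.mem_span_singleton_self _)) x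
      have huE : u ∈ EAlg X := EAlgY_anti bot_le (hu ⟨0, hn⟩)
      classical
      -- construct a family T
      set T : Fin n → ((X →ᵇ ℂ) → (X →ᵇ ℂ)) := fun i v =>
        if h : ∃ w : X →ᵇ ℂ, w ∈ EAlg X ∧
            ∀ x : X, Tendsto (fun r : ℝ => v (r • a i + x)) atTop (𝓝 (w x))
        then h.choose else v with hTdef
      have hT1 : ∀ i, ∀ v ∈ EAlg X, ∀ x : X,
          Tendsto (fun r : ℝ => v (r • a i + x)) atTop (𝓝 (T i v x)) := by
        intro i v hv x
        have hex : ∃ w : X →ᵇ ℂ, w ∈ EAlg X ∧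
            ∀ x : X, Tendsto (fun r : ℝ => v (r • a i + x)) atTop (𝓝 (w x)) := by
          obtain ⟨w, hw, hl⟩ := exists_limit ⊥ (a i) hv
          exact ⟨w, EAlgY_anti bot_le hw, hl⟩
        rw [hTdef]
        simp only [dif_pos hex]
        exact hex.choose_spec.2 x
      have hfix : composeFam T u = u :=
        comp_fix n T u fun i => Tfix (hT1 i) huE (hinv i)
      have := comp_mem n a T hT1 u huE
      rw [hgen] at this
      rwa [hfix] at this
  · intro T hT1 hT2
    refine ⟨fun u hu => ?_, fun u hu v hv c => comp_linear n a T hT1 u hu v hv c, fun u hu => ?_⟩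
    · have := comp_mem n a T hT1 u hu
      rwa [hgen] at this
    · refine comp_fix n T u fun i => Tfix (hT1 i) (EAlgY_anti bot_le hu) fun r x => ?_
      exact EAlgY_invariant hu (Submodule.smul_mem _ r (haY i)) x
end
end
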